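/- arXiv:2509.18821 — 3 statements merged into one kernel-verified Lean document; each statement's English description precedes it below -/
import Mathlib

section
/- (Uniqueness of equilibrium under Lasry–Lions monotonicity, abstract version.) Let A be a set, and let J : A × A → ℝ (interpreting J(ξ, ζ) as the payoff of control ξ against the population induced by ζ). Suppose: (i) for each ζ, the map ξ ↦ J(ξ, ζ) has a unique maximizer; (ii) the monotonicity condition J(ξ, ξ) − J(ζ, ξ) − (J(ξ, ζ) − J(ζ, ζ)) ≤ 0 holds for all ξ, ζ ∈ A. Then there is at most one ξ ∈ A such that ξ maximizes J(·, ξ). -/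
/-- Uniqueness of equilibrium under Lasry–Lions monotonicity (abstract version):
if every population input has a unique best response, and the monotonicity condition
`J(ξ,ξ) − J(ζ,ξ) − (J(ξ,ζ) − J(ζ,ζ)) ≤ 0` holds, then there is at most one equilibrium. -/
theorem stmt_4 {A : Type*} [Nonempty A] (J : A → A → ℝ)
    (huniq : ∀ ζ ξstar : A, (∀ ξ, J ξ ζ ≤ J ξstar ζ) → ∀ ξ, ξ ≠ ξstar → J ξ ζ < J ξstar ζ)
    (hmono : ∀ ξ ζ : A, J ξ ξ - J ζ ξ - (J ξ ζ - J ζ ζ) ≤ 0) :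
    ∀ ξ ζ : A, (∀ η, J η ξ ≤ J ξ ξ) → (∀ η, J η ζ ≤ J ζ ζ) → ξ = ζ := by
  intro ξ ζ hξ hζ
  by_contra h
  have h1 : J ζ ξ < J ξ ξ := huniq ξ ξ hξ ζ (Ne.symm h)
  have h2 : J ξ ζ < J ζ ζ := huniq ζ ζ hζ ξ h
  have := hmono ξ ζ
  linarith
end

section
/- (Monotone fictitious play generates monotone iterates.) Let (P, ≤) be a partially ordered set with binary averaging operations making it convex in an ordered vector space sense, let Γ : A → P be antitone and R : P → A be antitone, where (A, ≤) is a partially ordered convex subset of a vector space closed under convex combinations that respect the order (if a ≤ b and a' ≤ b' then θa+(1−θ)a' ≤ θb+(1−θ)b'). Define ξ^{k+1} := R(Γ(ξ̄^k)) and ξ̄^{k+1} := (k/(k+1))ξ̄^k + (1/(k+1))ξ^{k+1}, and suppose ξ^1 ≤ ξ̄^0. Then by induction ξ^{k+1} ≤ ξ^k and ξ̄^{k+1} ≤ ξ̄^k for all k ≥ 1, provided Γ of a convex combination equals the convex combination of Γ values (Γ affine). -/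
/-!
The invariant is `ξ^{k+1} ≤ ξ̄^k`. Given it, `ξ̄^{k+1}` is a convex combination of `ξ̄^k` and
a point below it, hence lies below `ξ̄^k` and above `ξ^{k+1}`; the monotone map `R ∘ Γ` then
gives `ξ^{k+2} ≤ ξ^{k+1} ≤ ξ̄^{k+1}`, which is the invariant at `k + 1`.
-/

open Set

def ConvexCombinationMonotone (E : Type*) [AddCommGroup E] [Module ℝ E] [PartialOrder E] : Prop :=
  ∀ θ : ℝ, θ ∈ Icc (0:ℝ) 1 → ∀ a b a' b' : E, a ≤ b → a' ≤ b' →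
    θ • a + (1 - θ) • a' ≤ θ • b + (1 - θ) • b'

namespace ConvexCombinationMonotone

variable {E : Type*} [AddCommGroup E] [Module ℝ E] [PartialOrder E]

theorem combo_le (hE : ConvexCombinationMonotone E) {θ : ℝ} (hθ : θ ∈ Icc (0:ℝ) 1)
    {a b c : E} (ha : a ≤ c) (hb : b ≤ c) : θ • a + (1 - θ) • b ≤ c := by
  simpa only [Convex.combo_self (add_sub_cancel θ 1)] using hE θ hθ a c b c ha hb

theorem le_combo (hE : ConvexCombinationMonotone E) {θ : ℝ} (hθ : θ ∈ Icc (0:ℝ) 1)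
    {a b c : E} (ha : c ≤ a) (hb : c ≤ b) : c ≤ θ • a + (1 - θ) • b := by
  simpa only [Convex.combo_self (add_sub_cancel θ 1)] using hE θ hθ c a c b ha hb

end ConvexCombinationMonotone

theorem natCast_div_natCast_add_one_mem_Icc (k : ℕ) : (k : ℝ) / ((k : ℝ) + 1) ∈ Icc (0:ℝ) 1 :=
  ⟨by positivity, (div_le_one (by positivity)).2 (by linarith)⟩

theorem one_sub_natCast_div_natCast_add_one (k : ℕ) :
    (1 : ℝ) - (k : ℝ) / ((k : ℝ) + 1) = 1 / ((k : ℝ) + 1) := by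
  field_simp
  ring

theorem stmt_14_general
    {E F : Type*} [AddCommGroup E] [Module ℝ E] [PartialOrder E]
    [AddCommGroup F] [Module ℝ F] [PartialOrder F]
    (hordE : ∀ θ : ℝ, θ ∈ Icc (0:ℝ) 1 → ∀ a b a' b' : E, a ≤ b → a' ≤ b' →
      θ • a + (1 - θ) • a' ≤ θ • b + (1 - θ) • b')
    (Γ : E → F)
    (hΓanti : ∀ a b : E, a ≤ b → Γ b ≤ Γ a)
    (R : F → E)
    (hRanti : ∀ p q : F, p ≤ q → R q ≤ R p)
    (ξ ξbar : ℕ → E)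
    (hstep : ∀ k : ℕ, ξ (k + 1) = R (Γ (ξbar k)))
    (havg : ∀ k : ℕ, ξbar (k + 1)
      = ((k : ℝ) / ((k : ℝ) + 1)) • ξbar k + ((1 : ℝ) / ((k : ℝ) + 1)) • ξ (k + 1))
    (hinit : ξ 1 ≤ ξbar 0) :
    ∀ k : ℕ, 1 ≤ k → ξ (k + 1) ≤ ξ k ∧ ξbar (k + 1) ≤ ξbar k := by
  have hE : ConvexCombinationMonotone E := hordE
  have hRΓ : Monotone (R ∘ Γ) :=
    Antitone.comp (fun _ _ h ↦ hRanti _ _ h) (fun _ _ h ↦ hΓanti _ _ h)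
  have havg' (k : ℕ) : ξbar (k + 1) = ((k : ℝ) / ((k : ℝ) + 1)) • ξbar k
      + (1 - (k : ℝ) / ((k : ℝ) + 1)) • ξ (k + 1) := by
    rw [havg k, one_sub_natCast_div_natCast_add_one]
  have hbar_le {k : ℕ} (h : ξ (k + 1) ≤ ξbar k) : ξbar (k + 1) ≤ ξbar k :=
    havg' k ▸ hE.combo_le (natCast_div_natCast_add_one_mem_Icc k) le_rfl h
  have le_bar {k : ℕ} (h : ξ (k + 1) ≤ ξbar k) : ξ (k + 1) ≤ ξbar (k + 1) :=
    havg' k ▸ hE.le_combo (natCast_div_natCast_add_one_mem_Icc k) h le_rfl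
  have hξ_le {k : ℕ} (h : ξ (k + 1) ≤ ξbar k) : ξ (k + 2) ≤ ξ (k + 1) := by
    rw [hstep (k + 1), hstep k]
    exact hRΓ (hbar_le h)
  have hinv (k : ℕ) : ξ (k + 1) ≤ ξbar k := by
    induction k with
    | zero => exact hinit
    | succ k ih => exact (hξ_le ih).trans (le_bar ih)
  intro k hk
  obtain ⟨m, rfl⟩ := Nat.exists_eq_add_of_le' hk
  exact ⟨hξ_le (hinv m), hbar_le (hinv (m + 1))⟩

/-- Monotone fictitious play generates monotone iterates: with `Γ` affine and antitone,
`R` antitone, order-compatible convex combinations, iterates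
`ξ^{k+1} = R(Γ(ξ̄^k))`, `ξ̄^{k+1} = (k/(k+1)) ξ̄^k + (1/(k+1)) ξ^{k+1}`, and `ξ¹ ≤ ξ̄⁰`,
one has `ξ^{k+1} ≤ ξ^k` and `ξ̄^{k+1} ≤ ξ̄^k` for all `k ≥ 1`. -/
theorem stmt_14
    {E F : Type*} [AddCommGroup E] [Module ℝ E] [PartialOrder E]
    [AddCommGroup F] [Module ℝ F] [PartialOrder F]
    (hordE : ∀ θ : ℝ, θ ∈ Icc (0:ℝ) 1 → ∀ a b a' b' : E, a ≤ b → a' ≤ b' →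
      θ • a + (1 - θ) • a' ≤ θ • b + (1 - θ) • b')
    (Γ : E → F)
    (hΓaff : ∀ θ : ℝ, θ ∈ Icc (0:ℝ) 1 → ∀ a b : E,
      Γ (θ • a + (1 - θ) • b) = θ • Γ a + (1 - θ) • Γ b)
    (hΓanti : ∀ a b : E, a ≤ b → Γ b ≤ Γ a)
    (R : F → E)
    (hRanti : ∀ p q : F, p ≤ q → R q ≤ R p)
    (ξ ξbar : ℕ → E)
    (hstep : ∀ k : ℕ, ξ (k + 1) = R (Γ (ξbar k)))
    (havg : ∀ k : ℕ, ξbar (k + 1)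
      = ((k : ℝ) / ((k : ℝ) + 1)) • ξbar k + ((1 : ℝ) / ((k : ℝ) + 1)) • ξ (k + 1))
    (hinit : ξ 1 ≤ ξbar 0) :
    ∀ k : ℕ, 1 ≤ k → ξ (k + 1) ≤ ξ k ∧ ξbar (k + 1) ≤ ξbar k :=
  stmt_14_general hordE Γ hΓanti R hRanti ξ ξbar hstep havg hinit
end

section
/- Let (ε_n) be a sequence of nonnegative reals and (δ_n) a sequence with δ_n → 0, satisfying ε_{n+1} − ε_n ≤ −ε_n/(n+1) + δ_n/n for all n ≥ 1. Then ε_n → 0 as n → ∞. -/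
open Filter Finset

/-- Hadikhanloo-type real-analysis lemma: if `ε_n ≥ 0`, `δ_n → 0`, and
`ε_{n+1} − ε_n ≤ −ε_n/(n+1) + δ_n/n` for all `n ≥ 1`, then `ε_n → 0`. -/
theorem stmt_15 (ε δ : ℕ → ℝ)
    (hε : ∀ n, 0 ≤ ε n)
    (hδ : Tendsto δ atTop (nhds 0))
    (hrec : ∀ n : ℕ, 1 ≤ n → ε (n + 1) - ε n ≤ -ε n / ((n : ℝ) + 1) + δ n / (n : ℝ)) :
    Tendsto ε atTop (nhds 0) := by
  set c : ℕ → ℝ := fun n => 2 * |δ n| with hc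
  have hc0 : Tendsto c atTop (nhds 0) := by
    have := (hδ.abs).const_mul (2 : ℝ)
    simpa using this
  -- key bound: n * ε n ≤ ε 1 + ∑_{k ∈ Ico 1 n} c k for n ≥ 1
  have key : ∀ n : ℕ, 1 ≤ n → (n : ℝ) * ε n ≤ ε 1 + ∑ k ∈ Ico 1 n, c k := by
    intro n hn
    induction n with
    | zero => omega
    | succ m ih =>
      rcases Nat.eq_or_lt_of_le hn with h1 | h1
      · simp [← h1]
      · have hm : 1 ≤ m := by omega
        have ihm := ih hm
        have hmpos : (0 : ℝ) < m := by exact_mod_cast hm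
        have hrecm := hrec m hm
        -- (m+1) * ε(m+1) ≤ m * ε m + (m+1)/m * δ m
        have h2 : ((m : ℝ) + 1) * ε (m + 1) ≤ (m : ℝ) * ε m + ((m : ℝ) + 1) / m * δ m := by
          have hm0 : (m:ℝ) ≠ 0 := hmpos.ne'
          have hm1 : ((m:ℝ) + 1) ≠ 0 := by positivity
          have hr : ε (m+1) ≤ ε m + (-ε m / ((m:ℝ)+1) + δ m / m) := by linarith
          have heq : ε m + (-ε m / ((m:ℝ)+1) + δ m / m)
              = ε m * ((m : ℝ) / (m + 1)) + δ m / m := by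
            field_simp; ring
          rw [heq] at hr
          have hpos : (0 : ℝ) < (m : ℝ) + 1 := by positivity
          calc ((m : ℝ) + 1) * ε (m + 1)
              ≤ ((m : ℝ) + 1) * (ε m * ((m : ℝ) / (m + 1)) + δ m / m) := by
                exact mul_le_mul_of_nonneg_left hr (le_of_lt hpos)
            _ = (m : ℝ) * ε m + ((m : ℝ) + 1) / m * δ m := by
                have hm0 : (m:ℝ) ≠ 0 := hmpos.ne'
                have hm1 : ((m:ℝ) + 1) ≠ 0 := by positivity
                field_simp
        have h3 : ((m : ℝ) + 1) / m * δ m ≤ c m := by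
          rcases le_or_gt (δ m) 0 with h | h
          · have : ((m : ℝ) + 1) / m * δ m ≤ 0 := by
              apply mul_nonpos_of_nonneg_of_nonpos _ h
              positivity
            have : (0:ℝ) ≤ c m := by positivity
            linarith [mul_nonpos_of_nonneg_of_nonpos (by positivity : (0:ℝ) ≤ ((m : ℝ) + 1) / m) h]
          · have hle : ((m : ℝ) + 1) / m ≤ 2 := by
              rw [div_le_iff₀ hmpos]; have : (1:ℝ) ≤ m := by exact_mod_cast hm
              linarith
            have : ((m : ℝ) + 1) / m * δ m ≤ 2 * δ m :=
              mul_le_mul_of_nonneg_right hle h.le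
            have habs : δ m ≤ |δ m| := le_abs_self _
            simp only [hc]
            nlinarith
        have hsum : ∑ k ∈ Ico 1 (m+1), c k = ∑ k ∈ Ico 1 m, c k + c m := by
          rw [Finset.sum_Ico_succ_top hm]
        push_cast
        rw [hsum]
        linarith
  -- upper bound sequence tends to 0
  have hub : Tendsto (fun n : ℕ => ((n : ℝ))⁻¹ * (ε 1 + ∑ k ∈ Ico 1 n, c k)) atTop (nhds 0) := by
    have hces := hc0.cesaro
    have h1n : Tendsto (fun n : ℕ => ((n : ℝ))⁻¹ * (ε 1 - c 0)) atTop (nhds 0) := by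
      simpa using tendsto_inv_atTop_nhds_zero_nat.mul_const (ε 1 - c 0)
    have := h1n.add hces
    rw [add_zero] at this
    apply this.congr'
    filter_upwards [eventually_ge_atTop 1] with n hn
    have : ∑ k ∈ range n, c k = c 0 + ∑ k ∈ Ico 1 n, c k := by
      rw [Finset.range_eq_Ico, ← Finset.sum_eq_sum_Ico_succ_bot (by omega : 0 < n)]
    rw [this]; ring
  -- squeeze
  have hε_le : ∀ᶠ n in atTop, ε n ≤ ((n : ℝ))⁻¹ * (ε 1 + ∑ k ∈ Ico 1 n, c k) := by
    filter_upwards [eventually_ge_atTop 1] with n hn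
    have hnpos : (0 : ℝ) < n := by exact_mod_cast hn
    have := key n hn
    rw [inv_mul_eq_div, le_div_iff₀ hnpos]
    linarith
  exact tendsto_of_tendsto_of_tendsto_of_le_of_le' tendsto_const_nhds hub
    (Eventually.of_forall hε) hε_le
end
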